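/- arXiv:1607.07555 — 2 statements merged into one kernel-verified Lean document; each statement's English description precedes it below -/
import Mathlib

section
/- Convergence in capacity implies convergence in distribution (under monotone continuity): assume $V$ is continuous from above; if $X_n \to X$ in capacity and both $X$ and all $X_n$ lie in $L^1_b$ (i.e., $\hat{E}[|Z| 1_{\{|Z| > c\}}] \to 0$ as $c \to \infty$), then for every bounded continuous $f : \mathbb{R} \to \mathbb{R}$, $\hat{E}[f(X_n)] \to \hat{E}[f(X)]$. -/
open MeasureTheory Filter Set Topology ENNReal

/-- The upper capacity associated to a family of probability measures. -/
noncomputable def upperCap {Ω : Type*} [MeasurableSpace Ω]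
    (Ps : Set (Measure Ω)) (A : Set Ω) : ℝ≥0∞ :=
  ⨆ P ∈ Ps, P A

/-- The sublinear expectation (of a nonnegative quantity). -/
noncomputable def subExpNN {Ω : Type*} [MeasurableSpace Ω]
    (Ps : Set (Measure Ω)) (Z : Ω → ℝ) : ℝ≥0∞ :=
  ⨆ P ∈ Ps, ∫⁻ ω, ENNReal.ofReal (Z ω) ∂P

/-- The sublinear expectation (real-valued, for bounded quantities). -/
noncomputable def subExp {Ω : Type*} [MeasurableSpace Ω]
    (Ps : Set (Measure Ω)) (Z : Ω → ℝ) : ℝ :=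
  ⨆ P ∈ Ps, ∫ ω, Z ω ∂P

/-- Membership in `L^1_b`: the truncated tails of `Z` are uniformly small. -/
def MemL1b {Ω : Type*} [MeasurableSpace Ω] (Ps : Set (Measure Ω)) (Z : Ω → ℝ) : Prop :=
  Tendsto (fun c : ℝ =>
      subExpNN Ps (fun ω => Set.indicator {ω' | c < |Z ω'|} (fun ω' => |Z ω'|) ω))
    atTop (𝓝 0)

/-!
Continuity of the capacity from above makes `X` tight: `upperCap Ps {N < |X|} → 0`, since these
sets decrease to `∅`. Fix a level `R` with small tail capacity and a modulus `δ` of uniform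
continuity of `f` at `[-R, R]`. Off `{R < |X|} ∪ {δ ≤ |Xn - X|}`, whose capacity is eventually
small, `f ∘ Xn` and `f ∘ X` are `ε / 2`-close, and on it they differ by at most `2 M`. This bounds
`|∫ f ∘ Xn dP - ∫ f ∘ X dP|` uniformly in `P ∈ Ps`, so the bound passes to the suprema.
-/

lemma abs_ciSup_sub_ciSup_le {ι : Type*} [Nonempty ι] {a b : ι → ℝ} {c : ℝ}
    (ha : BddAbove (range a)) (hb : BddAbove (range b)) (h : ∀ i, |a i - b i| ≤ c) :
    |(⨆ i, a i) - ⨆ i, b i| ≤ c := by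
  rw [abs_sub_le_iff, sub_le_iff_le_add, sub_le_iff_le_add]
  constructor
  · exact ciSup_le fun i => by linarith [le_ciSup hb i, (abs_sub_le_iff.1 (h i)).1]
  · exact ciSup_le fun i => by linarith [le_ciSup ha i, (abs_sub_le_iff.1 (h i)).2]

lemma Continuous.exists_pos_forall_abs_sub_lt {f : ℝ → ℝ} (hf : Continuous f) (R : ℝ) {η : ℝ}
    (hη : 0 < η) : ∃ δ > 0, ∀ x y, |x| ≤ R → |y - x| < δ → |f y - f x| < η := by
  obtain ⟨δ, hδ, hfδ⟩ := Metric.mem_uniformity_dist.1 <|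
    (isCompact_closedBall (0 : ℝ) R).uniformContinuousAt_of_continuousAt f
      (fun _ _ => hf.continuousAt) (Metric.dist_mem_uniformity hη)
  refine ⟨δ, hδ, fun x y hx hxy => ?_⟩
  rw [← Real.dist_eq, dist_comm] at hxy ⊢
  exact hfδ hxy (by simpa using hx)

section SublinearExpectation

variable {Ω : Type*} [MeasurableSpace Ω]

lemma abs_integral_sub_integral_le {P : Measure Ω} [IsProbabilityMeasure P] {u v : Ω → ℝ}
    {M η : ℝ} {A : Set Ω} (hu : AEStronglyMeasurable u P) (hv : AEStronglyMeasurable v P)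
    (huM : ∀ ω, |u ω| ≤ M) (hvM : ∀ ω, |v ω| ≤ M) (hA : MeasurableSet A) (hη : 0 ≤ η)
    (huv : ∀ ω ∉ A, |u ω - v ω| ≤ η) :
    |∫ ω, u ω ∂P - ∫ ω, v ω ∂P| ≤ η + 2 * M * P.real A := by
  have hu' : Integrable u P := .of_bound hu M (ae_of_all _ huM)
  have hv' : Integrable v P := .of_bound hv M (ae_of_all _ hvM)
  have hbound : ∀ ω, |u ω - v ω| ≤ η + A.indicator (fun _ => 2 * M) ω := by
    intro ω
    by_cases hω : ω ∈ A
    · rw [indicator_of_mem hω]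
      linarith [abs_sub (u ω) (v ω), huM ω, hvM ω]
    · rw [indicator_of_notMem hω, add_zero]
      exact huv ω hω
  calc |∫ ω, u ω ∂P - ∫ ω, v ω ∂P| = |∫ ω, (u ω - v ω) ∂P| := by rw [integral_sub hu' hv']
    _ ≤ ∫ ω, |u ω - v ω| ∂P := abs_integral_le_integral_abs
    _ ≤ ∫ ω, (η + A.indicator (fun _ => 2 * M) ω) ∂P :=
        integral_mono (hu'.sub hv').abs ((integrable_const _).add
          ((integrable_const _).indicator hA)) hbound
    _ = η + 2 * M * P.real A := by
        rw [integral_add (integrable_const _) ((integrable_const _).indicator hA),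
          integral_const, integral_indicator_const _ hA]
        simp [mul_comm]

variable {Ps : Set (Measure Ω)}

lemma measure_le_upperCap {P : Measure Ω} (hP : P ∈ Ps) (A : Set Ω) : P A ≤ upperCap Ps A :=
  le_iSup₂ (f := fun Q (_ : Q ∈ Ps) => Q A) P hP

lemma tendsto_upperCap_abs_gt_atTop
    (hV : ∀ B : ℕ → Set Ω, (∀ n, MeasurableSet (B n)) → Antitone B →
      Tendsto (fun n => upperCap Ps (B n)) atTop (𝓝 (upperCap Ps (⋂ n, B n))))
    {X : Ω → ℝ} (hX : Measurable X) :
    Tendsto (fun N : ℕ => upperCap Ps {ω | (N : ℝ) < |X ω|}) atTop (𝓝 0) := by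
  have hempty : ⋂ N : ℕ, {ω | (N : ℝ) < |X ω|} = ∅ := by
    refine eq_empty_of_forall_notMem fun ω hω => ?_
    obtain ⟨N, hN⟩ := exists_nat_gt |X ω|
    exact (mem_iInter.1 hω N).not_gt hN
  simpa [hempty, upperCap] using hV (fun N : ℕ => {ω | (N : ℝ) < |X ω|})
    (fun N => measurableSet_lt measurable_const hX.abs)
    fun m n hmn _ (hω : (n : ℝ) < _) => (Nat.cast_le.2 hmn).trans_lt hω

lemma abs_subExp_sub_subExp_le (hprob : ∀ P ∈ Ps, IsProbabilityMeasure P) {Z W : Ω → ℝ}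
    {M c : ℝ} (hZ : ∀ ω, |Z ω| ≤ M) (hW : ∀ ω, |W ω| ≤ M) (hc : 0 ≤ c)
    (h : ∀ P ∈ Ps, |∫ ω, Z ω ∂P - ∫ ω, W ω ∂P| ≤ c) :
    |subExp Ps Z - subExp Ps W| ≤ c := by
  have hbdd : ∀ U : Ω → ℝ, (∀ ω, |U ω| ≤ M) →
      BddAbove (range fun P => ⨆ _ : P ∈ Ps, ∫ ω, U ω ∂P) := by
    rintro U hU
    refine ⟨max M 0, ?_⟩
    rintro _ ⟨P, rfl⟩
    by_cases hP : P ∈ Ps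
    · have := hprob P hP
      have := norm_integral_le_of_norm_le_const (μ := P) (f := U) (C := M) (ae_of_all _ hU)
      simp only [ciSup_pos hP, probReal_univ, mul_one, Real.norm_eq_abs] at this ⊢
      exact (le_abs_self _).trans (this.trans (le_max_left _ _))
    · simp only [ciSup_neg hP, Real.sSup_empty, le_max_right]
  refine abs_ciSup_sub_ciSup_le (hbdd Z hZ) (hbdd W hW) fun P => ?_
  by_cases hP : P ∈ Ps
  · simpa only [ciSup_pos hP] using h P hP
  · -- junk value: for `P ∉ Ps` both inner suprema are `sSup ∅ = 0`
    simpa only [ciSup_neg hP, sub_self, abs_zero] using hc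

lemma abs_subExp_comp_sub_comp_le (hprob : ∀ P ∈ Ps, IsProbabilityMeasure P) {f : ℝ → ℝ}
    (hf : Measurable f) {M : ℝ} (hM : ∀ x, |f x| ≤ M) {R δ η : ℝ} (hη : 0 ≤ η)
    (hfδ : ∀ x y, |x| ≤ R → |y - x| < δ → |f y - f x| < η) {X Y : Ω → ℝ} (hX : Measurable X)
    (hY : Measurable Y) {κ : ℝ} (hκ : 0 ≤ κ)
    (hdev : upperCap Ps {ω | δ ≤ |Y ω - X ω|} ≤ ENNReal.ofReal κ)
    (htail : upperCap Ps {ω | R < |X ω|} ≤ ENNReal.ofReal κ) :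
    |subExp Ps (fun ω => f (Y ω)) - subExp Ps (fun ω => f (X ω))| ≤ η + 2 * M * (2 * κ) := by
  set A := {ω | δ ≤ |Y ω - X ω|} ∪ {ω | R < |X ω|} with hA
  have hAmeas : MeasurableSet A := (measurableSet_le measurable_const (hY.sub hX).abs).union
    (measurableSet_lt measurable_const hX.abs)
  have hPA : ∀ P ∈ Ps, P.real A ≤ 2 * κ := fun P hP => toReal_le_of_le_ofReal (by positivity) <|
    calc P A ≤ ENNReal.ofReal κ + ENNReal.ofReal κ := (measure_union_le _ _).trans <|
          add_le_add ((measure_le_upperCap hP _).trans hdev)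
            ((measure_le_upperCap hP _).trans htail)
      _ = ENNReal.ofReal (2 * κ) := by rw [← ofReal_add hκ hκ, two_mul]
  have hM0 : 0 ≤ M := (abs_nonneg _).trans (hM 0)
  refine abs_subExp_sub_subExp_le hprob (fun _ => hM _) (fun _ => hM _) (by positivity)
    fun P hP => ?_
  have := hprob P hP
  refine (abs_integral_sub_integral_le (hf.comp hY).aestronglyMeasurable
    (hf.comp hX).aestronglyMeasurable (fun _ => hM _) (fun _ => hM _) hAmeas hη
    fun ω hω => ?_).trans (by gcongr; exact hPA P hP)
  simp only [hA, mem_union, mem_ofPred_eq, not_or, not_le, not_lt] at hω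
  exact (hfδ _ _ hω.2 hω.1).le

end SublinearExpectation

theorem capacity_convergence_implies_distribution_general {Ω : Type*} [MeasurableSpace Ω]
    (Ps : Set (Measure Ω))
    (hprob : ∀ P ∈ Ps, IsProbabilityMeasure P)
    (hV : ∀ B : ℕ → Set Ω, (∀ n, MeasurableSet (B n)) → Antitone B →
      Tendsto (fun n => upperCap Ps (B n)) atTop (𝓝 (upperCap Ps (⋂ n, B n))))
    (X : Ω → ℝ) (Xn : ℕ → Ω → ℝ) (hX : Measurable X) (hXn : ∀ n, Measurable (Xn n))
    (hconv : ∀ ε > (0 : ℝ),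
      Tendsto (fun n => upperCap Ps {ω | ε ≤ |Xn n ω - X ω|}) atTop (𝓝 0)) :
    ∀ f : ℝ → ℝ, Continuous f → (∃ M, ∀ x, |f x| ≤ M) →
      Tendsto (fun n => subExp Ps (fun ω => f (Xn n ω))) atTop
        (𝓝 (subExp Ps (fun ω => f (X ω)))) := by
  rintro f hf ⟨M, hM⟩
  rw [Metric.tendsto_nhds]
  intro ε hε
  have hM0 : 0 ≤ M := (abs_nonneg _).trans (hM 0)
  -- chosen so that `ε / 2 + 2 * M * (2 * κ) < ε`
  set κ := ε / (8 * (M + 1)) with hκ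
  have hκ0 : 0 < κ := by positivity
  obtain ⟨R, hR⟩ := ((tendsto_upperCap_abs_gt_atTop hV hX).eventually_lt_const
    (ofReal_pos.2 hκ0)).exists
  obtain ⟨δ, hδ, hfδ⟩ := hf.exists_pos_forall_abs_sub_lt R (half_pos hε)
  filter_upwards [(hconv δ hδ).eventually_lt_const (ofReal_pos.2 hκ0)] with n hn
  rw [Real.dist_eq]
  refine (abs_subExp_comp_sub_comp_le hprob hf.measurable hM (half_pos hε).le hfδ hX (hXn n)
    hκ0.le hn.le hR.le).trans_lt ?_
  rw [hκ]
  field_simp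
  nlinarith

theorem capacity_convergence_implies_distribution {Ω : Type*} [MeasurableSpace Ω]
    (Ps : Set (Measure Ω)) (hne : Ps.Nonempty)
    (hprob : ∀ P ∈ Ps, IsProbabilityMeasure P)
    (hV : ∀ B : ℕ → Set Ω, (∀ n, MeasurableSet (B n)) → Antitone B →
      Tendsto (fun n => upperCap Ps (B n)) atTop (𝓝 (upperCap Ps (⋂ n, B n))))
    (X : Ω → ℝ) (Xn : ℕ → Ω → ℝ) (hX : Measurable X) (hXn : ∀ n, Measurable (Xn n))
    (hXL1b : MemL1b Ps X) (hXnL1b : ∀ n, MemL1b Ps (Xn n))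
    (hconv : ∀ ε > (0 : ℝ),
      Tendsto (fun n => upperCap Ps {ω | ε ≤ |Xn n ω - X ω|}) atTop (𝓝 0)) :
    ∀ f : ℝ → ℝ, Continuous f → (∃ M, ∀ x, |f x| ≤ M) →
      Tendsto (fun n => subExp Ps (fun ω => f (Xn n ω))) atTop
        (𝓝 (subExp Ps (fun ω => f (X ω)))) :=
  capacity_convergence_implies_distribution_general Ps hprob hV X Xn hX hXn hconv
end

section
/- Portmanteau, lower semicontinuous direction: if $\hat{E}[f(X_n)] \to \hat{E}[f(X)]$ for every bounded continuous $f : \mathbb{R} \to \mathbb{R}$, and $\hat{E}$ is continuous under monotone increasing limits of functions bounded below, then for every bounded lower semicontinuous $f : \mathbb{R} \to \mathbb{R}$, $\liminf_{n} \hat{E}[f(X_n)] \ge \hat{E}[f(X)]$. -/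
/-!
Approximate the bounded lower semicontinuous `f` from below by its Lipschitz envelopes
`f_K x = inf_y (f y + K |x - y|)`: these are bounded and `K`-Lipschitz, increase with `K`, and
converge pointwise to `f` by lower semicontinuity. For each `K`, convergence in distribution
gives `Ê[f_K(X)] = lim_n Ê[f_K(X_n)] ≤ liminf_n Ê[f(X_n)]`, and monotone continuity of `Ê`
lets `K → ∞` on the left.
-/

open MeasureTheory Filter Set Topology ENNReal

open NNReal

theorem Filter.Tendsto.le_liminf_of_eventuallyLE {α β : Type*}
    [ConditionallyCompleteLinearOrder β] [TopologicalSpace β] [OrderTopology β]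
    {l : Filter α} [l.NeBot] {u v : α → β} {a : β} (hu : Tendsto u l (𝓝 a))
    (huv : u ≤ᶠ[l] v) (hv : IsCoboundedUnder (· ≥ ·) l v) : a ≤ liminf v l :=
  hu.liminf_eq ▸ liminf_le_liminf huv hu.isBoundedUnder_ge hv

section LipschitzEnvelope

variable {α : Type*} [PseudoMetricSpace α] {f : α → ℝ}

noncomputable def lipschitzEnvelope (f : α → ℝ) (K : ℝ≥0) (x : α) : ℝ :=
  ⨅ y, f y + K * dist x y

lemma bddBelow_range_add_mul_dist (hf : BddBelow (range f)) (K : ℝ≥0) (x : α) :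
    BddBelow (range fun y => f y + K * dist x y) := by
  obtain ⟨c, hc⟩ := hf
  exact ⟨c, forall_mem_range.2 fun y =>
    le_add_of_le_of_nonneg (hc (mem_range_self y)) (by positivity)⟩

lemma lipschitzEnvelope_le_add_mul_dist (hf : BddBelow (range f)) (K : ℝ≥0) (x y : α) :
    lipschitzEnvelope f K x ≤ f y + K * dist x y :=
  ciInf_le (bddBelow_range_add_mul_dist hf K x) y

lemma lipschitzEnvelope_le (hf : BddBelow (range f)) (K : ℝ≥0) (x : α) :
    lipschitzEnvelope f K x ≤ f x := by
  simpa using lipschitzEnvelope_le_add_mul_dist hf K x x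

lemma le_lipschitzEnvelope [Nonempty α] {c : ℝ} (hc : ∀ y, c ≤ f y) (K : ℝ≥0) (x : α) :
    c ≤ lipschitzEnvelope f K x :=
  le_ciInf fun y => le_add_of_le_of_nonneg (hc y) (by positivity)

lemma monotone_lipschitzEnvelope (hf : BddBelow (range f)) (x : α) :
    Monotone fun K => lipschitzEnvelope f K x := fun _ _ hKK' =>
  ciInf_mono (bddBelow_range_add_mul_dist hf _ x) fun _ => by gcongr

lemma lipschitzWith_lipschitzEnvelope (hf : BddBelow (range f)) (K : ℝ≥0) :
    LipschitzWith K (lipschitzEnvelope f K) := by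
  refine LipschitzWith.of_le_add_mul K fun x x' => ?_
  have : Nonempty α := ⟨x⟩
  refine sub_le_iff_le_add.1 (le_ciInf fun y => ?_)
  have hxy := lipschitzEnvelope_le_add_mul_dist hf K x y
  have htri : (K : ℝ) * dist x y ≤ K * dist x x' + K * dist x' y := by
    rw [← mul_add]; gcongr; exact dist_triangle x x' y
  linarith

lemma le_lipschitzEnvelope_of_le_of_dist_lt {c t δ : ℝ} {K : ℝ≥0} {x : α}
    (hc : ∀ y, c ≤ f y) (hnear : ∀ y, dist x y < δ → t ≤ f y) (hK : t - c ≤ K * δ) :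
    t ≤ lipschitzEnvelope f K x := by
  have : Nonempty α := ⟨x⟩
  refine le_ciInf fun y => ?_
  rcases lt_or_ge (dist x y) δ with hy | hy
  · exact le_add_of_le_of_nonneg (hnear y hy) (by positivity)
  · have : (K : ℝ) * δ ≤ K * dist x y := by gcongr
    linarith [hc y]

lemma tendsto_lipschitzEnvelope (hf : LowerSemicontinuous f) (hb : BddBelow (range f)) (x : α) :
    Tendsto (fun n : ℕ => lipschitzEnvelope f n x) atTop (𝓝 (f x)) := by
  refine tendsto_order.2 ⟨fun t ht => ?_, fun t ht =>
    .of_forall fun n => (lipschitzEnvelope_le hb n x).trans_lt ht⟩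
  obtain ⟨t', htt', ht'⟩ := exists_between ht
  obtain ⟨δ, hδ, hnear⟩ := Metric.eventually_nhds_iff.1 (hf x t' ht')
  obtain ⟨c, hc⟩ := hb
  obtain ⟨N, hN⟩ := exists_nat_gt ((t' - c) / δ)
  filter_upwards [eventually_ge_atTop N] with n hn
  refine htt'.trans_le (le_lipschitzEnvelope_of_le_of_dist_lt (fun y => hc (mem_range_self y))
    (fun y hy => (hnear (by rwa [dist_comm])).le) ?_)
  have : (t' - c) / δ ≤ n := hN.le.trans (Nat.cast_le.2 hn)
  rw [div_le_iff₀ hδ] at this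
  simpa using this

end LipschitzEnvelope

section SubExp

variable {Ω : Type*} [MeasurableSpace Ω] {Ps : Set (Measure Ω)} {Z W : Ω → ℝ} {M : ℝ}

lemma integral_le_of_abs_le {P : Measure Ω} [IsProbabilityMeasure P] (hb : ∀ ω, |Z ω| ≤ M) :
    ∫ ω, Z ω ∂P ≤ M :=
  (le_abs_self _).trans <| by
    simpa using
      norm_integral_le_of_norm_le_const (μ := P) (f := Z) (.of_forall (by simpa using hb))

lemma integrable_of_abs_le {P : Measure Ω} [IsFiniteMeasure P] (hZ : Measurable Z)
    (hb : ∀ ω, |Z ω| ≤ M) : Integrable Z P :=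
  .of_bound hZ.aestronglyMeasurable M (.of_forall (by simpa using hb))

lemma iSup_mem_integral_le (hprob : ∀ P ∈ Ps, IsProbabilityMeasure P)
    (hb : ∀ ω, |Z ω| ≤ M) (P : Measure Ω) :
    ⨆ _ : P ∈ Ps, ∫ ω, Z ω ∂P ≤ max M 0 :=
  Real.iSup_le (fun hP => have := hprob P hP; (integral_le_of_abs_le hb).trans (le_max_left _ _))
    (le_max_right _ _)

/-- The `max` with `0` accounts for `Ps = ∅`, where `subExp Ps Z = 0`. -/
lemma subExp_le_max (hprob : ∀ P ∈ Ps, IsProbabilityMeasure P) (hb : ∀ ω, |Z ω| ≤ M) :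
    subExp Ps Z ≤ max M 0 :=
  Real.iSup_le (iSup_mem_integral_le hprob hb) (le_max_right _ _)

lemma subExp_mono (hprob : ∀ P ∈ Ps, IsProbabilityMeasure P) (hZ : Measurable Z)
    (hW : Measurable W) (hZb : ∀ ω, |Z ω| ≤ M) (hWb : ∀ ω, |W ω| ≤ M) (hZW : Z ≤ W) :
    subExp Ps Z ≤ subExp Ps W :=
  ciSup_mono ⟨max M 0, forall_mem_range.2 (iSup_mem_integral_le hprob hWb)⟩ fun P =>
    ciSup_mono (finite_range _).bddAbove fun hP =>
      have := hprob P hP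
      integral_mono (integrable_of_abs_le hZ hZb) (integrable_of_abs_le hW hWb) hZW

end SubExp

theorem portmanteau_lsc_general {Ω : Type*} [MeasurableSpace Ω]
    (Ps : Set (Measure Ω))
    (hprob : ∀ P ∈ Ps, IsProbabilityMeasure P)
    (X : Ω → ℝ) (Xn : ℕ → Ω → ℝ) (hX : Measurable X) (hXn : ∀ n, Measurable (Xn n))
    -- monotone continuity of the sublinear expectation under increasing limits
    -- of functions bounded below:
    (hmc : ∀ (g : ℕ → Ω → ℝ) (G : Ω → ℝ) (c : ℝ),
      (∀ m, Measurable (g m)) → Measurable G → (∀ m ω, c ≤ g m ω) →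
      (∀ ω, Monotone fun m => g m ω) →
      (∀ ω, Tendsto (fun m => g m ω) atTop (𝓝 (G ω))) →
      Tendsto (fun m => subExp Ps (g m)) atTop (𝓝 (subExp Ps G)))
    -- convergence in distribution:
    (hd : ∀ f : ℝ → ℝ, Continuous f → (∃ M, ∀ x, |f x| ≤ M) →
      Tendsto (fun n => subExp Ps (fun ω => f (Xn n ω))) atTop
        (𝓝 (subExp Ps (fun ω => f (X ω))))) :
    ∀ f : ℝ → ℝ, LowerSemicontinuous f → (∃ M, ∀ x, |f x| ≤ M) →
      subExp Ps (fun ω => f (X ω)) ≤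
        Filter.liminf (fun n => subExp Ps (fun ω => f (Xn n ω))) atTop := by
  rintro f hf ⟨M, hM⟩
  have hf_ge : ∀ x, -M ≤ f x := fun x => neg_le_of_abs_le (hM x)
  have hfb : BddBelow (range f) := ⟨-M, forall_mem_range.2 hf_ge⟩
  let g : ℕ → ℝ → ℝ := fun m => lipschitzEnvelope f m
  have hg_cont m : Continuous (g m) := (lipschitzWith_lipschitzEnvelope hfb m).continuous
  have hg_ge m x : -M ≤ g m x := le_lipschitzEnvelope hf_ge m x
  have hg_abs m x : |g m x| ≤ M :=
    abs_le.2 ⟨hg_ge m x, (lipschitzEnvelope_le hfb m x).trans (le_of_abs_le (hM x))⟩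
  have hlim : Tendsto (fun m => subExp Ps fun ω => g m (X ω)) atTop
      (𝓝 (subExp Ps fun ω => f (X ω))) :=
    hmc _ _ (-M) (fun m => (hg_cont m).measurable.comp hX) (hf.measurable.comp hX)
      (fun m ω => hg_ge m _)
      (fun ω => (monotone_lipschitzEnvelope hfb (X ω)).comp Nat.mono_cast)
      (fun ω => tendsto_lipschitzEnvelope hf hfb (X ω))
  have hcobdd : IsCoboundedUnder (· ≥ ·) atTop fun n => subExp Ps fun ω => f (Xn n ω) :=
    IsBoundedUnder.isCoboundedUnder_ge <|
      isBoundedUnder_of ⟨max M 0, fun _ => subExp_le_max hprob fun _ => hM _⟩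
  have hle m n : (subExp Ps fun ω => g m (Xn n ω)) ≤ subExp Ps fun ω => f (Xn n ω) :=
    subExp_mono hprob ((hg_cont m).measurable.comp (hXn n)) (hf.measurable.comp (hXn n))
      (fun ω => hg_abs m _) (fun ω => hM _) (fun ω => lipschitzEnvelope_le hfb m _)
  exact le_of_tendsto' hlim fun m =>
    (hd (g m) (hg_cont m) ⟨M, hg_abs m⟩).le_liminf_of_eventuallyLE (.of_forall (hle m)) hcobdd

theorem portmanteau_lsc {Ω : Type*} [MeasurableSpace Ω]
    (Ps : Set (Measure Ω)) (hne : Ps.Nonempty)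
    (hprob : ∀ P ∈ Ps, IsProbabilityMeasure P)
    (X : Ω → ℝ) (Xn : ℕ → Ω → ℝ) (hX : Measurable X) (hXn : ∀ n, Measurable (Xn n))
    -- monotone continuity of the sublinear expectation under increasing limits
    -- of functions bounded below:
    (hmc : ∀ (g : ℕ → Ω → ℝ) (G : Ω → ℝ) (c : ℝ),
      (∀ m, Measurable (g m)) → Measurable G → (∀ m ω, c ≤ g m ω) →
      (∀ ω, Monotone fun m => g m ω) →
      (∀ ω, Tendsto (fun m => g m ω) atTop (𝓝 (G ω))) →
      Tendsto (fun m => subExp Ps (g m)) atTop (𝓝 (subExp Ps G)))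
    -- convergence in distribution:
    (hd : ∀ f : ℝ → ℝ, Continuous f → (∃ M, ∀ x, |f x| ≤ M) →
      Tendsto (fun n => subExp Ps (fun ω => f (Xn n ω))) atTop
        (𝓝 (subExp Ps (fun ω => f (X ω))))) :
    ∀ f : ℝ → ℝ, LowerSemicontinuous f → (∃ M, ∀ x, |f x| ≤ M) →
      subExp Ps (fun ω => f (X ω)) ≤
        Filter.liminf (fun n => subExp Ps (fun ω => f (Xn n ω))) atTop :=
  portmanteau_lsc_general Ps hprob X Xn hX hXn hmc hd
end
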